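/- arXiv:0904.0158 — 3 statements merged into one kernel-verified Lean document; each statement's English description precedes it below -/
import Mathlib

section
/- Let H be a complex Hilbert space, Ω ∈ H, and T > 0. Let L : [0,T] → B(H) be a family of bounded self-adjoint operators on H such that t ↦ L(t)Ω is continuous, and let χ : [0,T] → ℝ be continuous. Suppose Ψ : [0,T] → H is differentiable with Ψ(0) = Ω and Ψ'(t) = i·(L(t)Ψ(t) − χ(t)Ψ(t)) for all t ∈ [0,T]. Then for every t ∈ [0,T], ‖ e^{i∫₀ᵗ χ(s) ds} · Ψ(t) − Ω ‖ ≤ ∫₀ᵗ ‖L(s)Ω‖ ds. -/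
/-!
Multiplying by the phase `exp (i ∫₀ᵗ χ)` removes `χ`: `Φ = exp (i ∫₀ᵗ χ) • Ψ` solves
`Φ' = i L Φ`. Then `u = Φ - Ω` satisfies `u' = i L u + i L Ω`, and `i L u` is orthogonal to `u`
for the real inner product `re ⟪·, ·⟫` because `L` is self-adjoint. Hence `‖u‖` grows at rate at
most `‖L Ω‖`, and integrating from `u 0 = 0` gives the bound.
-/

open MeasureTheory Set

theorem norm_le_add_integral_of_inner_deriv_le {E : Type*} [NormedAddCommGroup E]
    [InnerProductSpace ℝ E] {u u' : ℝ → E} {h : ℝ → ℝ} {a b : ℝ} (hab : a ≤ b)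
    (hcont : ContinuousOn u (Icc a b)) (hderiv : ∀ t ∈ Ioo a b, HasDerivAt u (u' t) t)
    (hint : IntegrableOn h (Icc a b)) (hh : ∀ t ∈ Ioo a b, 0 ≤ h t)
    (hle : ∀ t ∈ Ioo a b, inner ℝ (u t) (u' t) ≤ ‖u t‖ * h t) :
    ‖u b‖ ≤ ‖u a‖ + ∫ t in a..b, h t := by
  refine le_of_forall_pos_le_add fun ε hε => ?_
  -- `‖u‖` need not be differentiable where `u` vanishes, so differentiate `√(‖u‖² + ε²)`.
  set g : ℝ → ℝ := fun t => √(‖u t‖ ^ 2 + ε ^ 2)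
  have hpos : ∀ t, 0 < ‖u t‖ ^ 2 + ε ^ 2 := fun t => by positivity
  have hnorm_le : ∀ t, ‖u t‖ ≤ g t := fun t =>
    Real.le_sqrt_of_sq_le (le_add_of_nonneg_right (sq_nonneg ε))
  have hg_deriv : ∀ t ∈ Ioo a b,
      HasDerivAt g (2 * inner ℝ (u t) (u' t) / (2 * g t)) t := fun t ht =>
    ((hderiv t ht).norm_sq.add_const _).sqrt (hpos t).ne'
  have hg_deriv_le : ∀ t ∈ Ioo a b, 2 * inner ℝ (u t) (u' t) / (2 * g t) ≤ h t := by
    intro t ht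
    rw [div_le_iff₀ (by positivity)]
    nlinarith [hle t ht, mul_le_mul_of_nonneg_right (hnorm_le t) (hh t ht)]
  have hg_cont : ContinuousOn g (Icc a b) :=
    ((hcont.norm.pow 2).add continuousOn_const).sqrt
  have hga : g a ≤ ‖u a‖ + ε :=
    Real.sqrt_le_iff.mpr ⟨by positivity, by nlinarith [norm_nonneg (u a)]⟩
  have := intervalIntegral.sub_le_integral_of_hasDeriv_right_of_le hab hg_cont
    (fun t ht => (hg_deriv t ht).hasDerivWithinAt) hint hg_deriv_le
  linarith [hnorm_le b]

theorem norm_sub_le_integral_of_hasDerivAt_I_smul {H : Type*} [NormedAddCommGroup H]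
    [InnerProductSpace ℂ H] {A : ℝ → H →L[ℂ] H} {Φ : ℝ → H} {a b : ℝ} (hab : a ≤ b)
    (hA : ∀ t ∈ Ioo a b, (A t : H →ₗ[ℂ] H).IsSymmetric) (hcont : ContinuousOn Φ (Icc a b))
    (hΦ : ∀ t ∈ Ioo a b, HasDerivAt Φ (Complex.I • A t (Φ t)) t)
    (hint : IntegrableOn (fun t => ‖A t (Φ a)‖) (Icc a b)) :
    ‖Φ b - Φ a‖ ≤ ∫ t in a..b, ‖A t (Φ a)‖ := by
  let _ := InnerProductSpace.complexToReal (G := H)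
  have hle : ∀ t ∈ Ioo a b, inner ℝ (Φ t - Φ a) (Complex.I • A t (Φ t)) ≤
      ‖Φ t - Φ a‖ * ‖A t (Φ a)‖ := by
    intro t ht
    set u := Φ t - Φ a
    -- `⟪u, i A u⟫` is purely imaginary, so only the source term `A (Φ a)` contributes.
    have hskew : inner ℝ u (Complex.I • A t u) = 0 := by
      rw [real_inner_eq_re_inner, inner_smul_right]
      simpa using (hA t ht).im_inner_self_apply u
    calc inner ℝ u (Complex.I • A t (Φ t))
        = inner ℝ u (Complex.I • A t u) + inner ℝ u (Complex.I • A t (Φ a)) := by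
          rw [← inner_add_right, ← smul_add, ← map_add, sub_add_cancel]
      _ ≤ ‖u‖ * ‖A t (Φ a)‖ := by
          rw [hskew, zero_add]
          refine (real_inner_le_norm _ _).trans_eq ?_
          rw [norm_smul, Complex.norm_I, one_mul]
  simpa using norm_le_add_integral_of_inner_deriv_le (u := fun t => Φ t - Φ a) hab
    (hcont.sub continuousOn_const) (fun t ht => (hΦ t ht).sub_const _) hint
    (fun _ _ => norm_nonneg _) hle

theorem hasDerivAt_exp_I_mul_smul {H : Type*} [NormedAddCommGroup H] [InnerProductSpace ℂ H]
    {A : H →L[ℂ] H} {θ : ℝ → ℝ} {Ψ : ℝ → H} {c t : ℝ} (hθ : HasDerivAt θ c t)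
    (hΨ : HasDerivAt Ψ (Complex.I • (A (Ψ t) - (c : ℂ) • Ψ t)) t) :
    HasDerivAt (fun s => Complex.exp (Complex.I * θ s) • Ψ s)
      (Complex.I • A (Complex.exp (Complex.I * θ t) • Ψ t)) t := by
  refine ((hθ.ofReal_comp.const_mul Complex.I).cexp.smul hΨ).congr_deriv ?_
  rw [map_smul]
  module

theorem stmt_0_general {H : Type*} [NormedAddCommGroup H] [InnerProductSpace ℂ H] [CompleteSpace H]
    (Ω : H) (T : ℝ)
    (L : ℝ → H →L[ℂ] H)
    (hLsa : ∀ t ∈ Set.Icc (0 : ℝ) T, IsSelfAdjoint (L t))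
    (hLcont : ContinuousOn (fun t => L t Ω) (Set.Icc (0 : ℝ) T))
    (χ : ℝ → ℝ) (hχ : ContinuousOn χ (Set.Icc (0 : ℝ) T))
    (Ψ : ℝ → H) (hΨ0 : Ψ 0 = Ω)
    (hΨ : ∀ t ∈ Set.Icc (0 : ℝ) T,
      HasDerivAt Ψ (Complex.I • (L t (Ψ t) - (χ t : ℂ) • Ψ t)) t) :
    ∀ t ∈ Set.Icc (0 : ℝ) T,
      ‖Complex.exp (Complex.I * Complex.ofReal (∫ s in (0 : ℝ)..t, χ s)) • Ψ t - Ω‖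
        ≤ ∫ s in (0 : ℝ)..t, ‖L s Ω‖ := by
  intro t ht
  have hsub : Icc 0 t ⊆ Icc 0 T := Icc_subset_Icc_right ht.2
  have hsub' : Ioo 0 t ⊆ Ioo 0 T := Ioo_subset_Ioo_right ht.2
  have hIoo : Ioo 0 t ⊆ Icc 0 T := Ioo_subset_Icc_self.trans hsub
  set θ : ℝ → ℝ := fun s => ∫ x in (0 : ℝ)..s, χ x
  have hθ_cont : ContinuousOn θ (Icc 0 t) := by
    simpa only [uIcc_of_le ht.1] using intervalIntegral.continuousOn_primitive_interval
      (((hχ.mono hsub).integrableOn_Icc).mono_set (uIcc_of_le ht.1).subset)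
  have hθ_deriv : ∀ s ∈ Ioo 0 t, HasDerivAt θ (χ s) s := fun s hs =>
    intervalIntegral.integral_hasDerivAt_right
      ((hχ.mono (Icc_subset_Icc_right (hs.2.le.trans ht.2))).intervalIntegrable_of_Icc hs.1.le)
      ((hχ.mono Ioo_subset_Icc_self).stronglyMeasurableAtFilter isOpen_Ioo s (hsub' hs))
      ((hχ.mono Ioo_subset_Icc_self).continuousAt (isOpen_Ioo.mem_nhds (hsub' hs)))
  set Φ : ℝ → H := fun s => Complex.exp (Complex.I * θ s) • Ψ s
  have hΦ_cont : ContinuousOn Φ (Icc 0 t) := by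
    have hΨ_cont : ContinuousOn Ψ (Icc 0 t) := fun s hs =>
      (hΨ s (hsub hs)).continuousAt.continuousWithinAt
    fun_prop
  have hΦ0 : Φ 0 = Ω := by simp [Φ, θ, hΨ0]
  have := norm_sub_le_integral_of_hasDerivAt_I_smul ht.1
    (fun s hs => (hLsa s (hIoo hs)).isSymmetric) hΦ_cont
    (fun s hs => hasDerivAt_exp_I_mul_smul (hθ_deriv s hs) (hΨ s (hIoo hs)))
    (by rw [hΦ0]; exact ((hLcont.mono hsub).norm).integrableOn_Icc)
  rwa [hΦ0] at this

/-- Abstract energy estimate: a unitary-type evolution generated by a self-adjoint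
family `L`, corrected by a real scalar phase `χ`, stays within `∫ ‖L s Ω‖ ds`
of the initial vector `Ω`. -/
theorem stmt_0 {H : Type*} [NormedAddCommGroup H] [InnerProductSpace ℂ H] [CompleteSpace H]
    (Ω : H) (T : ℝ) (hT : 0 < T)
    (L : ℝ → H →L[ℂ] H)
    (hLsa : ∀ t ∈ Set.Icc (0 : ℝ) T, IsSelfAdjoint (L t))
    (hLcont : ContinuousOn (fun t => L t Ω) (Set.Icc (0 : ℝ) T))
    (χ : ℝ → ℝ) (hχ : ContinuousOn χ (Set.Icc (0 : ℝ) T))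
    (Ψ : ℝ → H) (hΨ0 : Ψ 0 = Ω)
    (hΨ : ∀ t ∈ Set.Icc (0 : ℝ) T,
      HasDerivAt Ψ (Complex.I • (L t (Ψ t) - (χ t : ℂ) • Ψ t)) t) :
    ∀ t ∈ Set.Icc (0 : ℝ) T,
      ‖Complex.exp (Complex.I * Complex.ofReal (∫ s in (0 : ℝ)..t, χ s)) • Ψ t - Ω‖
        ≤ ∫ s in (0 : ℝ)..t, ‖L s Ω‖ :=
  stmt_0_general Ω T L hLsa hLcont χ hχ Ψ hΨ0 hΨ
end

section
/- Let H be a complex Hilbert space and T : H → H a bounded linear operator. Then the series C := ∑_{n≥0} (T T*)ⁿ / (2n)! and S := ∑_{n≥0} (T T*)ⁿ T / (2n+1)! converge in operator norm, and C ∘ C − S ∘ S* = id_H. -/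
/-!
Put `K = !![0, a; b, 0]` in the Banach algebra of `2 × 2` matrices over `R`. Then
`K ^ (2n) = diag ((ab)ⁿ, (ba)ⁿ)` and `K ^ (2n+1) = !![0, (ab)ⁿ a; (ba)ⁿ b, 0]`, so the even and odd
parts `cosh K = (exp K + exp (-K)) / 2` and `sinh K = (exp K - exp (-K)) / 2` of the exponential
series are `diag (C, C')` and `!![0, S; S', 0]`. As `K` commutes with `-K`,
`cosh K ^ 2 - sinh K ^ 2 = exp K * exp (-K) = 1`, whose `(0, 0)` entry is `C * C - S * S' = 1`.
For `b = a⋆` the series `S'` is the adjoint of `S`, because `(a a⋆)ⁿ a` and `(a⋆ a)ⁿ a⋆` are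
adjoint to each other.
-/

open NormedSpace
open scoped Nat

section Definitions

variable {A : Type*} [Ring A] [Module ℝ A] [TopologicalSpace A] [IsTopologicalRing A]

noncomputable def algCosh (x : A) : A := (2 : ℝ)⁻¹ • (exp x + exp (-x))

noncomputable def algSinh (x : A) : A := (2 : ℝ)⁻¹ • (exp x - exp (-x))

end Definitions

section BanachAlgebra

variable {A : Type*} [NormedRing A] [NormedAlgebra ℝ A] [CompleteSpace A]

lemma hasSum_algCosh (x : A) :
    HasSum (fun n : ℕ => ((2 * n)! : ℝ)⁻¹ • x ^ (2 * n)) (algCosh x) := by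
  set F : ℕ → A := fun n => (2 : ℝ)⁻¹ • ((n ! : ℝ)⁻¹ • x ^ n + (n ! : ℝ)⁻¹ • (-x) ^ n)
  have hF : HasSum F (algCosh x) :=
    ((exp_series_hasSum_exp' x).add (exp_series_hasSum_exp' (-x))).const_smul _
  have hodd : ∀ n ∉ Set.range (2 * ·), F n = 0 := by
    rintro n hn
    obtain ⟨k, rfl | rfl⟩ := n.even_or_odd'
    · exact absurd ⟨k, rfl⟩ hn
    · simp [F, (odd_two_mul_add_one k).neg_pow]
  rw [← (mul_right_injective₀ (two_ne_zero' ℕ)).hasSum_iff hodd] at hF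
  convert hF using 1
  funext n
  simp [F, (even_two_mul n).neg_pow, ← two_smul ℝ, smul_smul]

lemma hasSum_algSinh (x : A) :
    HasSum (fun n : ℕ => ((2 * n + 1)! : ℝ)⁻¹ • x ^ (2 * n + 1)) (algSinh x) := by
  set F : ℕ → A := fun n => (2 : ℝ)⁻¹ • ((n ! : ℝ)⁻¹ • x ^ n - (n ! : ℝ)⁻¹ • (-x) ^ n)
  have hF : HasSum F (algSinh x) :=
    ((exp_series_hasSum_exp' x).sub (exp_series_hasSum_exp' (-x))).const_smul _
  have heven : ∀ n ∉ Set.range (2 * · + 1), F n = 0 := by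
    rintro n hn
    obtain ⟨k, rfl | rfl⟩ := n.even_or_odd'
    · simp [F, (even_two_mul k).neg_pow]
    · exact absurd ⟨k, rfl⟩ hn
  have hinj : Function.Injective (2 * · + 1 : ℕ → ℕ) := fun m n h => by simpa using h
  rw [← hinj.hasSum_iff heven] at hF
  convert hF using 1
  funext n
  simp [F, (odd_two_mul_add_one n).neg_pow, ← two_smul ℝ, smul_smul]

lemma exp_mul_exp_neg (x : A) : exp x * exp (-x) = 1 := by
  let +nondep : NormedAlgebra ℚ A := .restrictScalars ℚ ℝ A
  rw [← exp_add_of_commute (Commute.refl x).neg_right, add_neg_cancel, exp_zero]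

lemma algCosh_mul_self_sub_algSinh_mul_self (x : A) :
    algCosh x * algCosh x - algSinh x * algSinh x = 1 := by
  have expand : ∀ e f : A, e * f = 1 → f * e = 1 →
      (e + f) * (e + f) - (e - f) * (e - f) = (4 : ℝ) • 1 := by
    intro e f hef hfe
    noncomm_ring
    rw [hef, hfe]
    norm_num [ofNat_smul_eq_nsmul]
  have h := exp_mul_exp_neg (-x)
  rw [neg_neg] at h
  simp only [algCosh, algSinh, smul_mul_smul_comm, ← smul_sub, expand _ _ (exp_mul_exp_neg x) h,
    smul_smul]
  rw [show (2⁻¹ * 2⁻¹ * 4 : ℝ) = 1 by norm_num, one_smul]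

end BanachAlgebra

lemma antidiag_fin_two_pow_two_mul {R : Type*} [Ring R] (a b : R) (n : ℕ) :
    !![0, a; b, 0] ^ (2 * n) = !![(a * b) ^ n, 0; 0, (b * a) ^ n] := by
  induction n with
  | zero => simp [Matrix.one_fin_two]
  | succ n ih => simp [mul_add, ih, pow_succ, mul_assoc]

lemma antidiag_fin_two_pow_two_mul_add_one {R : Type*} [Ring R] (a b : R) (n : ℕ) :
    !![0, a; b, 0] ^ (2 * n + 1) = !![0, (a * b) ^ n * a; (b * a) ^ n * b, 0] := by
  simp [pow_succ, antidiag_fin_two_pow_two_mul]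

lemma HasSum.matrix_apply {ι m n α : Type*} [AddCommMonoid α] [TopologicalSpace α]
    {f : ι → Matrix m n α} {M : Matrix m n α} (h : HasSum f M) (i : m) (j : n) :
    HasSum (fun k => f k i j) (M i j) :=
  Pi.hasSum.1 (Pi.hasSum.1 h i) j

theorem exists_hasSum_mul_self_sub_mul_eq_one {R : Type*} [NormedRing R] [NormedAlgebra ℝ R]
    [CompleteSpace R] (a b : R) :
    ∃ C S S' : R,
      HasSum (fun n : ℕ => ((2 * n)! : ℝ)⁻¹ • (a * b) ^ n) C ∧
      HasSum (fun n : ℕ => ((2 * n + 1)! : ℝ)⁻¹ • ((a * b) ^ n * a)) S ∧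
      HasSum (fun n : ℕ => ((2 * n + 1)! : ℝ)⁻¹ • ((b * a) ^ n * b)) S' ∧
      C * C - S * S' = 1 := by
  let _ : NormedRing (Matrix (Fin 2) (Fin 2) R) := Matrix.linftyOpNormedRing
  let _ : NormedAlgebra ℝ (Matrix (Fin 2) (Fin 2) R) := Matrix.linftyOpNormedAlgebra
  -- The operator norm induces the product uniformity, but instance search does not see this,
  -- so completeness is passed by hand.
  have hcomplete : CompleteSpace (Matrix (Fin 2) (Fin 2) R) :=
    inferInstanceAs (CompleteSpace (Fin 2 → Fin 2 → R))
  have hc := @hasSum_algCosh _ _ _ hcomplete !![0, a; b, 0]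
  have hs := @hasSum_algSinh _ _ _ hcomplete !![0, a; b, 0]
  have h00 := congr_fun₂ (@algCosh_mul_self_sub_algSinh_mul_self _ _ _ hcomplete !![0, a; b, 0]) 0 0
  simp only [antidiag_fin_two_pow_two_mul, antidiag_fin_two_pow_two_mul_add_one] at hc hs
  have c01 := (by simpa using hc.matrix_apply 0 1 : HasSum (fun _ ↦ (0 : R)) _).unique hasSum_zero
  have c10 := (by simpa using hc.matrix_apply 1 0 : HasSum (fun _ ↦ (0 : R)) _).unique hasSum_zero
  have s00 := (by simpa using hs.matrix_apply 0 0 : HasSum (fun _ ↦ (0 : R)) _).unique hasSum_zero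
  simp only [Matrix.sub_apply, Matrix.mul_apply, Fin.sum_univ_two, c01, c10, s00] at h00
  exact ⟨_, _, _, by simpa using hc.matrix_apply 0 0, by simpa using hs.matrix_apply 0 1,
    by simpa using hs.matrix_apply 1 0, by simpa using h00⟩

theorem exists_hasSum_mul_self_sub_mul_star_eq_one {R : Type*} [NormedRing R]
    [NormedAlgebra ℝ R] [CompleteSpace R] [StarRing R] [ContinuousStar R] [StarModule ℝ R]
    (a : R) :
    ∃ C S : R,
      HasSum (fun n : ℕ => ((2 * n)! : ℝ)⁻¹ • (a * star a) ^ n) C ∧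
      HasSum (fun n : ℕ => ((2 * n + 1)! : ℝ)⁻¹ • ((a * star a) ^ n * a)) S ∧
      C * C - S * star S = 1 := by
  obtain ⟨C, S, S', hC, hS, hS', h⟩ := exists_hasSum_mul_self_sub_mul_eq_one a (star a)
  have hstar :
      HasSum (fun n : ℕ => ((2 * n + 1)! : ℝ)⁻¹ • ((star a * a) ^ n * star a)) (star S) := by
    have e (n : ℕ) : star (((2 * n + 1)! : ℝ)⁻¹ • ((a * star a) ^ n * a)) =
        ((2 * n + 1)! : ℝ)⁻¹ • ((star a * a) ^ n * star a) := by
      rw [star_smul, star_trivial, star_mul, star_pow, star_mul, star_star, mul_pow_mul]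
    simpa only [e] using hS.star
  exact ⟨C, S, hC, hS, hS'.unique hstar ▸ h⟩

/-- Operator form of the hyperbolic identity `ch(k)² − sh(k) conj(sh(k)) = 1`:
for a bounded operator `T` on a complex Hilbert space, the series
`C = ∑ (T T*)ⁿ/(2n)!` and `S = ∑ (T T*)ⁿ T/(2n+1)!` converge in operator norm and
`C ∘ C − S ∘ S* = id`. -/
theorem stmt_4 {H : Type*} [NormedAddCommGroup H] [InnerProductSpace ℂ H] [CompleteSpace H]
    (T : H →L[ℂ] H) :
    ∃ C S : H →L[ℂ] H,
      HasSum (fun n : ℕ => ((Nat.factorial (2 * n) : ℝ))⁻¹ •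
        (T ∘L ContinuousLinearMap.adjoint T) ^ n) C ∧
      HasSum (fun n : ℕ => ((Nat.factorial (2 * n + 1) : ℝ))⁻¹ •
        (((T ∘L ContinuousLinearMap.adjoint T) ^ n) ∘L T)) S ∧
      C ∘L C - S ∘L ContinuousLinearMap.adjoint S = 1 := by
  simp only [← ContinuousLinearMap.star_eq_adjoint]
  exact exists_hasSum_mul_self_sub_mul_star_eq_one T
end

section
/- Let k₁, k₂, k₃ be Schwartz functions on ℝ × ℝ³ × ℝ³ and let S := i∂_t − Δ_x − Δ_y. Define the space composition (a ∘ b)(t, x, y) = ∫_{ℝ³} a(t, x, z) b(t, z, y) dz and let conj denote pointwise complex conjugation. Then, pointwise on ℝ × ℝ³ × ℝ³, S( k₁ ∘ conj(k₂) ∘ k₃ ) = (S k₁) ∘ conj(k₂) ∘ k₃ − k₁ ∘ conj(S k₂) ∘ k₃ + k₁ ∘ conj(k₂) ∘ (S k₃). -/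
open MeasureTheory

noncomputable section

/-- `ℝ³` -/
abbrev R3 : Type := EuclideanSpace ℝ (Fin 3)

/-- The Laplacian on `ℝ³`-variable functions, as the sum of the second derivatives
along the coordinate directions. -/
def lap3 (g : R3 → ℂ) (x : R3) : ℂ :=
  ∑ i : Fin 3,
    fderiv ℝ (fun z => fderiv ℝ g z (EuclideanSpace.single i (1 : ℝ))) x
      (EuclideanSpace.single i (1 : ℝ))

/-- The Schrödinger operator `S = i∂_t − Δ_x − Δ_y` acting on kernels `u(t, x, y)`. -/
def Sop (u : ℝ → R3 → R3 → ℂ) (t : ℝ) (x y : R3) : ℂ :=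
  Complex.I * deriv (fun s => u s x y) t
    - lap3 (fun x' => u t x' y) x - lap3 (fun y' => u t x y') y

/-- The space composition `(a ∘ b)(t, x, y) = ∫ a(t, x, z) b(t, z, y) dz`. -/
def tComp (a b : ℝ → R3 → R3 → ℂ) : ℝ → R3 → R3 → ℂ :=
  fun t x y => ∫ z : R3, a t x z * b t z y

/-- Pointwise complex conjugation of a time-dependent kernel. -/
def tConj (a : ℝ → R3 → R3 → ℂ) : ℝ → R3 → R3 → ℂ :=
  fun t x y => starRingEnd ℂ (a t x y)

/-!
Put `b = conj k₂`, again a Schwartz kernel, and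
`T(a, b, c)(t, x, y) = ∫∫ a(t, x, w) b(t, w, z) c(t, z, y) dz dw`.
The decay of `a` in `w` and of `c` in `z` dominates the integrand and its first derivatives
uniformly in `(t, x, y)`, so derivatives pass under the integral: `∂_t` falls on all three
factors, `∇_x` only on `a` and `∇_y` only on `c`. Hence
`S T = T(i∂_t a − Δ_x a, b, c) + T(a, i∂_t b, c) + T(a, b, i∂_t c − Δ_y c)`.
Integrating by parts in `w` and in `z` gives `T(Δ_y a, b, c) = T(a, Δ_x b, c)` and
`T(a, Δ_y b, c) = T(a, b, Δ_x c)`, which are exactly the terms needed to regroup this as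
`T(S a, b, c) − T(a, S̄ b, c) + T(a, b, S c)` with `S̄ = −i∂_t − Δ_x − Δ_y = conj ∘ S ∘ conj`.
-/

open scoped SchwartzMap LineDeriv

local notation "𝓚" => 𝓢(ℝ × R3 × R3, ℂ)

def eT : ℝ × R3 × R3 := (1, 0, 0)

def eX (i : Fin 3) : ℝ × R3 × R3 := (0, EuclideanSpace.single i 1, 0)

def eY (i : Fin 3) : ℝ × R3 × R3 := (0, 0, EuclideanSpace.single i 1)

section Slices

variable {F : Type*} [NormedAddCommGroup F] [NormedSpace ℝ F] {g : ℝ × R3 × R3 → F}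
  {t : ℝ} {x y : R3}

theorem HasFDerivAt.hasDerivAt_sliceT {g' : ℝ × R3 × R3 →L[ℝ] F}
    (hg : HasFDerivAt g g' (t, x, y)) : HasDerivAt (fun s => g (s, x, y)) (g' eT) t :=
  hg.comp_hasDerivAt t ((hasDerivAt_id t).prodMk (hasDerivAt_const t (x, y)))

theorem fderiv_sliceX_apply (hg : DifferentiableAt ℝ g (t, x, y)) (v : R3) :
    fderiv ℝ (fun x' => g (t, x', y)) x v = fderiv ℝ g (t, x, y) (0, v, 0) := by
  have hslice : HasFDerivAt (fun x' : R3 => ((t, x', y) : ℝ × R3 × R3))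
      ((0 : R3 →L[ℝ] ℝ).prod ((ContinuousLinearMap.id ℝ R3).prod 0)) x :=
    (hasFDerivAt_const t x).prodMk ((hasFDerivAt_id x).prodMk (hasFDerivAt_const y x))
  have h : HasFDerivAt (fun x' => g (t, x', y)) _ x := hg.hasFDerivAt.comp x hslice
  rw [h.fderiv]
  rfl

theorem fderiv_sliceY_apply (hg : DifferentiableAt ℝ g (t, x, y)) (v : R3) :
    fderiv ℝ (fun y' => g (t, x, y')) y v = fderiv ℝ g (t, x, y) (0, 0, v) := by
  have hslice : HasFDerivAt (fun y' : R3 => ((t, x, y') : ℝ × R3 × R3))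
      ((0 : R3 →L[ℝ] ℝ).prod ((0 : R3 →L[ℝ] R3).prod (ContinuousLinearMap.id ℝ R3))) y :=
    (hasFDerivAt_const t y).prodMk ((hasFDerivAt_const x y).prodMk (hasFDerivAt_id y))
  have h : HasFDerivAt (fun y' => g (t, x, y')) _ y := hg.hasFDerivAt.comp y hslice
  rw [h.fderiv]
  rfl

end Slices

theorem Sop_eq_fderiv {u : ℝ × R3 × R3 → ℂ} (hu : Differentiable ℝ u)
    (hu' : ∀ v, Differentiable ℝ fun q => fderiv ℝ u q v) (t : ℝ) (x y : R3) :
    Sop (fun s a b => u (s, a, b)) t x y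
      = Complex.I * fderiv ℝ u (t, x, y) eT
        - ∑ i, fderiv ℝ (fun q => fderiv ℝ u q (eX i)) (t, x, y) (eX i)
        - ∑ i, fderiv ℝ (fun q => fderiv ℝ u q (eY i)) (t, x, y) (eY i) := by
  simp only [Sop, lap3, (hu _).hasFDerivAt.hasDerivAt_sliceT.deriv, fderiv_sliceX_apply (hu _),
    fderiv_sliceY_apply (hu _)]
  simp only [fderiv_sliceX_apply (hu' _ _), fderiv_sliceY_apply (hu' _ _)]
  rfl

/-- `σ ∂_t − Δ_x − Δ_y`: `σ = i` gives `S`, and `σ = −i` gives `conj ∘ S ∘ conj`. -/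
def schrodinger (σ : ℂ) (f : 𝓚) : 𝓚 :=
  σ • ∂_{eT} f - ∑ i, ∂_{eX i} (∂_{eX i} f) - ∑ i, ∂_{eY i} (∂_{eY i} f)

theorem Sop_eq_schrodinger (f : 𝓚) (t : ℝ) (x y : R3) :
    Sop (fun s a b => f (s, a, b)) t x y = schrodinger Complex.I f (t, x, y) := by
  rw [Sop_eq_fderiv f.differentiable fun v => (∂_{v} f).differentiable]
  simp only [schrodinger, sub_apply, smul_apply, SchwartzMap.lineDerivOp_apply_eq_fderiv,
    smul_eq_mul, sum_apply]
  rfl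

section Conj

variable {E : Type*} [NormedAddCommGroup E] [NormedSpace ℝ E]

def schwartzConj : 𝓢(E, ℂ) →L[ℝ] 𝓢(E, ℂ) :=
  SchwartzMap.postcompCLM Complex.conjCLE.toContinuousLinearMap

theorem schwartzConj_apply (f : 𝓢(E, ℂ)) (x : E) : schwartzConj f x = starRingEnd ℂ (f x) :=
  rfl

theorem schwartzConj_lineDerivOp (v : E) (f : 𝓢(E, ℂ)) :
    schwartzConj (∂_{v} f) = ∂_{v} (schwartzConj f) := by
  ext x
  simp only [schwartzConj_apply, SchwartzMap.lineDerivOp_apply_eq_fderiv]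
  have h : HasFDerivAt (schwartzConj f) _ x :=
    (Complex.conjCLE.toContinuousLinearMap).hasFDerivAt.comp x (f.hasFDerivAt x)
  rw [h.fderiv]
  rfl

end Conj

theorem schwartzConj_schrodinger (σ : ℂ) (f : 𝓚) :
    schwartzConj (schrodinger σ f) = schrodinger (starRingEnd ℂ σ) (schwartzConj f) := by
  ext q
  simp [schrodinger, schwartzConj_apply, sum_apply, ← schwartzConj_lineDerivOp]

def decayWeight {E : Type*} [Norm E] (z : E) : ℝ := (1 + ‖z‖) ^ (-4 : ℝ)

section DecayWeight

variable {E E' : Type*} [SeminormedAddCommGroup E] [SeminormedAddCommGroup E']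

theorem decayWeight_nonneg (z : E) : 0 ≤ decayWeight z := by unfold decayWeight; positivity

theorem decayWeight_anti {z : E} {w : E'} (h : ‖z‖ ≤ ‖w‖) : decayWeight w ≤ decayWeight z :=
  Real.rpow_le_rpow_of_nonpos (by positivity) (by linarith) (by norm_num)

theorem decayWeight_le_one (z : E) : decayWeight z ≤ 1 :=
  Real.rpow_le_one_of_one_le_of_nonpos (by linarith [norm_nonneg z]) (by norm_num)

end DecayWeight

theorem integrable_decayWeight_prod :
    Integrable fun p : R3 × R3 => decayWeight p.1 * decayWeight p.2 := by
  have h : Integrable (decayWeight : R3 → ℝ) :=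
    integrable_one_add_norm (by norm_num [finrank_euclideanSpace])
  exact h.mul_prod h

theorem SchwartzMap.exists_norm_le_decayWeight {E V : Type*} [NormedAddCommGroup E]
    [NormedSpace ℝ E] [NormedAddCommGroup V] [NormedSpace ℝ V] (f : 𝓢(E, V)) :
    ∃ C, 0 ≤ C ∧ ∀ x, ‖f x‖ ≤ C * decayWeight x := by
  refine ⟨2 ^ 4 * (Finset.Iic (4, 0)).sup (fun m => SchwartzMap.seminorm ℝ m.1 m.2) f,
    by positivity, fun x => ?_⟩
  have h := SchwartzMap.one_add_le_sup_seminorm_apply (𝕜 := ℝ) (m := (4, 0)) le_rfl le_rfl f x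
  rw [norm_iteratedFDeriv_zero] at h
  have hpos : 0 < (1 + ‖x‖) ^ 4 := by positivity
  rw [decayWeight, Real.rpow_neg (by positivity), show (4 : ℝ) = (4 : ℕ) by norm_num,
    Real.rpow_natCast, ← div_eq_mul_inv, le_div_iff₀ hpos, mul_comm]
  exact h

theorem exists_tripleProduct_norm_le {E₁ E₂ E₃ : Type*} [NormedAddCommGroup E₁]
    [NormedSpace ℝ E₁] [NormedAddCommGroup E₂] [NormedSpace ℝ E₂] [NormedAddCommGroup E₃]
    [NormedSpace ℝ E₃] (A : 𝓢(ℝ × R3 × R3, E₁)) (B : 𝓢(ℝ × R3 × R3, E₂))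
    (C : 𝓢(ℝ × R3 × R3, E₃)) :
    ∃ M, ∀ (t : ℝ) (x y : R3) (p : R3 × R3),
      ‖A (t, x, p.2)‖ * ‖B (t, p.2, p.1)‖ * ‖C (t, p.1, y)‖
        ≤ M * (decayWeight p.1 * decayWeight p.2) := by
  obtain ⟨Ca, hCa, hA⟩ := A.exists_norm_le_decayWeight
  obtain ⟨Cb, hCb, hB⟩ := B.exists_norm_le_decayWeight
  obtain ⟨Cc, hCc, hC⟩ := C.exists_norm_le_decayWeight
  refine ⟨Ca * Cb * Cc, fun t x y p => ?_⟩
  have h₁ : ‖A (t, x, p.2)‖ ≤ Ca * decayWeight p.2 :=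
    (hA _).trans (by
      gcongr; exact decayWeight_anti ((norm_snd_le (x, p.2)).trans (norm_snd_le (t, x, p.2))))
  have h₂ : ‖B (t, p.2, p.1)‖ ≤ Cb :=
    (hB _).trans (mul_le_of_le_one_right hCb (decayWeight_le_one _))
  have h₃ : ‖C (t, p.1, y)‖ ≤ Cc * decayWeight p.1 :=
    (hC _).trans (by
      gcongr; exact decayWeight_anti ((norm_fst_le (p.1, y)).trans (norm_snd_le (t, p.1, y))))
  calc ‖A (t, x, p.2)‖ * ‖B (t, p.2, p.1)‖ * ‖C (t, p.1, y)‖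
      ≤ Ca * decayWeight p.2 * Cb * (Cc * decayWeight p.1) := by
        have := decayWeight_nonneg p.2
        gcongr
    _ = Ca * Cb * Cc * (decayWeight p.1 * decayWeight p.2) := by ring

section TripleIntegral

variable (a b c : 𝓚) (q : ℝ × R3 × R3)

/-- The integrand of the kernel of `a ∘ b ∘ c` at `q = (t, x, y)`, with `p = (z, w)`. -/
def tripleIntegrand (p : R3 × R3) : ℂ :=
  a (q.1, q.2.1, p.2) * b (q.1, p.2, p.1) * c (q.1, p.1, q.2.2)

def tripleIntegral : ℂ := ∫ p, tripleIntegrand a b c q p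

theorem continuous_tripleIntegrand : Continuous (tripleIntegrand a b c q) := by
  unfold tripleIntegrand
  fun_prop

theorem integrable_tripleIntegrand : Integrable (tripleIntegrand a b c q) := by
  obtain ⟨M, hM⟩ := exists_tripleProduct_norm_le a b c
  refine (integrable_decayWeight_prod.const_mul M).mono'
    (continuous_tripleIntegrand a b c q).aestronglyMeasurable (.of_forall fun p => ?_)
  simpa only [tripleIntegrand, norm_mul] using hM q.1 q.2.1 q.2.2 p

theorem tComp_tComp_eq_tripleIntegral :
    tComp (tComp (fun s u v => a (s, u, v)) fun s u v => b (s, u, v)) (fun s u v => c (s, u, v))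
      = fun t x y => tripleIntegral a b c (t, x, y) := by
  ext t x y
  simp only [tComp, tripleIntegral, ← integral_mul_const]
  exact (integral_prod _ (integrable_tripleIntegrand a b c (t, x, y))).symm

def tripleIntegralLeft : 𝓚 →ₗ[ℂ] ℂ where
  toFun a := tripleIntegral a b c q
  map_add' a a' := by
    simp only [tripleIntegral, tripleIntegrand, add_apply, add_mul]
    exact integral_add (integrable_tripleIntegrand a b c q) (integrable_tripleIntegrand a' b c q)
  map_smul' z a := by
    simp only [tripleIntegral, tripleIntegrand, smul_apply, smul_eq_mul, mul_assoc,
      integral_const_mul, RingHom.id_apply]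

def tripleIntegralMid : 𝓚 →ₗ[ℂ] ℂ where
  toFun b := tripleIntegral a b c q
  map_add' b b' := by
    simp only [tripleIntegral, tripleIntegrand, add_apply, mul_add, add_mul]
    exact integral_add (integrable_tripleIntegrand a b c q) (integrable_tripleIntegrand a b' c q)
  map_smul' z b := by
    simp only [tripleIntegral, tripleIntegrand, smul_apply, smul_eq_mul, mul_left_comm _ z,
      mul_assoc, integral_const_mul, RingHom.id_apply]

def tripleIntegralRight : 𝓚 →ₗ[ℂ] ℂ where
  toFun c := tripleIntegral a b c q
  map_add' c c' := by
    simp only [tripleIntegral, tripleIntegrand, add_apply, mul_add]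
    exact integral_add (integrable_tripleIntegrand a b c q) (integrable_tripleIntegrand a b c' q)
  map_smul' z c := by
    simp only [tripleIntegral, tripleIntegrand, smul_apply, smul_eq_mul, mul_left_comm _ z,
      integral_const_mul, RingHom.id_apply]

theorem tripleIntegralLeft_apply : tripleIntegralLeft b c q a = tripleIntegral a b c q := rfl

theorem tripleIntegralMid_apply : tripleIntegralMid a c q b = tripleIntegral a b c q := rfl

theorem tripleIntegralRight_apply : tripleIntegralRight a b q c = tripleIntegral a b c q := rfl

theorem tripleIntegral_schrodinger_left (σ : ℂ) :
    tripleIntegral (schrodinger σ a) b c q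
      = σ * tripleIntegral (∂_{eT} a) b c q - ∑ i, tripleIntegral (∂_{eX i} (∂_{eX i} a)) b c q
        - ∑ i, tripleIntegral (∂_{eY i} (∂_{eY i} a)) b c q := by
  simp only [← tripleIntegralLeft_apply, schrodinger, map_sub, map_smul, map_sum, smul_eq_mul]

theorem tripleIntegral_schrodinger_mid (σ : ℂ) :
    tripleIntegral a (schrodinger σ b) c q
      = σ * tripleIntegral a (∂_{eT} b) c q - ∑ i, tripleIntegral a (∂_{eX i} (∂_{eX i} b)) c q
        - ∑ i, tripleIntegral a (∂_{eY i} (∂_{eY i} b)) c q := by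
  simp only [← tripleIntegralMid_apply, schrodinger, map_sub, map_smul, map_sum, smul_eq_mul]

theorem tripleIntegral_schrodinger_right (σ : ℂ) :
    tripleIntegral a b (schrodinger σ c) q
      = σ * tripleIntegral a b (∂_{eT} c) q - ∑ i, tripleIntegral a b (∂_{eX i} (∂_{eX i} c)) q
        - ∑ i, tripleIntegral a b (∂_{eY i} (∂_{eY i} c)) q := by
  simp only [← tripleIntegralRight_apply, schrodinger, map_sub, map_smul, map_sum, smul_eq_mul]

end TripleIntegral

theorem hasTemperateGrowth_embedY (t : ℝ) (x : R3) :
    Function.HasTemperateGrowth fun w : R3 => ((t, x, w) : ℝ × R3 × R3) := by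
  have h : (fun w : R3 => ((t, x, w) : ℝ × R3 × R3)) = fun w =>
      (t, x, 0) + (ContinuousLinearMap.inr ℝ ℝ (R3 × R3) ∘L ContinuousLinearMap.inr ℝ R3 R3) w := by
    ext w <;> simp
  rw [h]
  fun_prop

theorem hasTemperateGrowth_embedX (t : ℝ) (y : R3) :
    Function.HasTemperateGrowth fun w : R3 => ((t, w, y) : ℝ × R3 × R3) := by
  have h : (fun w : R3 => ((t, w, y) : ℝ × R3 × R3)) = fun w =>
      (t, 0, y) + (ContinuousLinearMap.inr ℝ ℝ (R3 × R3) ∘L ContinuousLinearMap.inl ℝ R3 R3) w := by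
    ext w <;> simp
  rw [h]
  fun_prop

def sliceY (t : ℝ) (x : R3) (f : 𝓚) : 𝓢(R3, ℂ) :=
  SchwartzMap.compCLM ℝ (hasTemperateGrowth_embedY t x)
    ⟨1, 1, fun w => by
      rw [one_mul, pow_one]
      linarith [(norm_snd_le (x, w)).trans (norm_snd_le (t, x, w))]⟩ f

def sliceX (t : ℝ) (y : R3) (f : 𝓚) : 𝓢(R3, ℂ) :=
  SchwartzMap.compCLM ℝ (hasTemperateGrowth_embedX t y)
    ⟨1, 1, fun w => by
      rw [one_mul, pow_one]
      linarith [(norm_fst_le (w, y)).trans (norm_snd_le (t, w, y))]⟩ f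

theorem sliceY_apply (t : ℝ) (x : R3) (f : 𝓚) (w : R3) : sliceY t x f w = f (t, x, w) := rfl

theorem sliceX_apply (t : ℝ) (y : R3) (f : 𝓚) (w : R3) : sliceX t y f w = f (t, w, y) := rfl

theorem lineDerivOp_sliceY (t : ℝ) (x v : R3) (f : 𝓚) :
    ∂_{v} (sliceY t x f) = sliceY t x (∂_{((0 : ℝ), (0 : R3), v)} f) := by
  ext w
  show fderiv ℝ (fun w' => f (t, x, w')) w v = fderiv ℝ f (t, x, w) (0, 0, v)
  exact fderiv_sliceY_apply f.differentiableAt v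

theorem lineDerivOp_sliceX (t : ℝ) (y v : R3) (f : 𝓚) :
    ∂_{v} (sliceX t y f) = sliceX t y (∂_{((0 : ℝ), v, (0 : R3))} f) := by
  ext w
  show fderiv ℝ (fun w' => f (t, w', y)) w v = fderiv ℝ f (t, w, y) (0, v, 0)
  exact fderiv_sliceX_apply f.differentiableAt v

theorem SchwartzMap.integral_lineDerivOp_lineDerivOp_mul {D : Type*} [NormedAddCommGroup D]
    [NormedSpace ℝ D] [MeasurableSpace D] [BorelSpace D] [FiniteDimensional ℝ D]
    {μ : Measure D} [μ.IsAddHaarMeasure] (f g : 𝓢(D, ℂ)) (v : D) :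
    ∫ x, ∂_{v} (∂_{v} f) x * g x ∂μ = ∫ x, f x * ∂_{v} (∂_{v} g) x ∂μ := by
  calc ∫ x, ∂_{v} (∂_{v} f) x * g x ∂μ = ∫ x, g x * ∂_{v} (∂_{v} f) x ∂μ := by
        simp_rw [mul_comm]
    _ = -∫ x, ∂_{v} g x * ∂_{v} f x ∂μ := integral_mul_lineDerivOp_right_eq_neg_left g _ v
    _ = -∫ x, ∂_{v} f x * ∂_{v} g x ∂μ := by simp_rw [mul_comm]
    _ = ∫ x, f x * ∂_{v} (∂_{v} g) x ∂μ := by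
      rw [integral_mul_lineDerivOp_right_eq_neg_left f _ v]

theorem integral_lineDerivOp_eY_eY_mul (f g : 𝓚) (t : ℝ) (x z : R3) (i : Fin 3) :
    ∫ w, ∂_{eY i} (∂_{eY i} f) (t, x, w) * g (t, w, z)
      = ∫ w, f (t, x, w) * ∂_{eX i} (∂_{eX i} g) (t, w, z) := by
  have := SchwartzMap.integral_lineDerivOp_lineDerivOp_mul (μ := volume) (sliceY t x f)
    (sliceX t z g) (EuclideanSpace.single i 1)
  simpa only [lineDerivOp_sliceY, lineDerivOp_sliceX, sliceY_apply, sliceX_apply, eX, eY]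
    using this

theorem tripleIntegral_lineDerivOp_eY_eY_left (a b c : 𝓚) (q : ℝ × R3 × R3) (i : Fin 3) :
    tripleIntegral (∂_{eY i} (∂_{eY i} a)) b c q
      = tripleIntegral a (∂_{eX i} (∂_{eX i} b)) c q := by
  simp only [tripleIntegral]
  rw [Measure.volume_eq_prod, integral_prod _ (integrable_tripleIntegrand _ _ _ q),
    integral_prod _ (integrable_tripleIntegrand _ _ _ q)]
  congr 1 with z
  simp only [tripleIntegrand, integral_mul_const, integral_lineDerivOp_eY_eY_mul]

theorem tripleIntegral_lineDerivOp_eY_eY_mid (a b c : 𝓚) (q : ℝ × R3 × R3) (i : Fin 3) :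
    tripleIntegral a (∂_{eY i} (∂_{eY i} b)) c q
      = tripleIntegral a b (∂_{eX i} (∂_{eX i} c)) q := by
  simp only [tripleIntegral]
  rw [Measure.volume_eq_prod, integral_prod_symm _ (integrable_tripleIntegrand _ _ _ q),
    integral_prod_symm _ (integrable_tripleIntegrand _ _ _ q)]
  congr 1 with w
  simp only [tripleIntegrand, mul_assoc, integral_const_mul, integral_lineDerivOp_eY_eY_mul]

/-- `projLeft`, `projMid` and `projRight` are the derivatives in `q = (t, x, y)` of the points
`(t, x, w)`, `(t, w, z)` and `(t, z, y)` at which the three factors of `tripleIntegrand` are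
evaluated. -/
def projLeft : (ℝ × R3 × R3) →L[ℝ] ℝ × R3 × R3 :=
  (ContinuousLinearMap.fst ℝ ℝ (R3 × R3)).prod
    (((ContinuousLinearMap.fst ℝ R3 R3).comp (ContinuousLinearMap.snd ℝ ℝ (R3 × R3))).prod 0)

def projMid : (ℝ × R3 × R3) →L[ℝ] ℝ × R3 × R3 :=
  (ContinuousLinearMap.fst ℝ ℝ (R3 × R3)).prod 0

def projRight : (ℝ × R3 × R3) →L[ℝ] ℝ × R3 × R3 :=
  (ContinuousLinearMap.fst ℝ ℝ (R3 × R3)).prod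
    ((0 : (ℝ × R3 × R3) →L[ℝ] R3).prod
      ((ContinuousLinearMap.snd ℝ R3 R3).comp (ContinuousLinearMap.snd ℝ ℝ (R3 × R3))))

theorem hasFDerivAt_leftPoint (q : ℝ × R3 × R3) (w : R3) :
    HasFDerivAt (fun q : ℝ × R3 × R3 => ((q.1, q.2.1, w) : ℝ × R3 × R3)) projLeft q :=
  hasFDerivAt_fst.prodMk (hasFDerivAt_snd.fst.prodMk (hasFDerivAt_const _ _))

theorem hasFDerivAt_midPoint (q : ℝ × R3 × R3) (w z : R3) :
    HasFDerivAt (fun q : ℝ × R3 × R3 => ((q.1, w, z) : ℝ × R3 × R3)) projMid q :=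
  hasFDerivAt_fst.prodMk (hasFDerivAt_const _ _)

theorem hasFDerivAt_rightPoint (q : ℝ × R3 × R3) (z : R3) :
    HasFDerivAt (fun q : ℝ × R3 × R3 => ((q.1, z, q.2.2) : ℝ × R3 × R3)) projRight q :=
  hasFDerivAt_fst.prodMk ((hasFDerivAt_const _ _).prodMk hasFDerivAt_snd.snd)

theorem norm_smul_comp_le {E F : Type*} [NormedAddCommGroup E] [NormedSpace ℝ E]
    [NormedAddCommGroup F] [NormedSpace ℝ F] (s : ℂ) (L : F →L[ℝ] ℂ) (P : E →L[ℝ] F) :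
    ‖s • L.comp P‖ ≤ ‖P‖ * (‖s‖ * ‖L‖) := by
  rw [norm_smul, mul_left_comm]
  gcongr
  exact (L.opNorm_comp_le P).trans_eq (mul_comm _ _)

section TripleIntegralDeriv

variable (a b c : 𝓚)

def tripleIntegrandDeriv (q : ℝ × R3 × R3) (p : R3 × R3) : (ℝ × R3 × R3) →L[ℝ] ℂ :=
  (b (q.1, p.2, p.1) * c (q.1, p.1, q.2.2)) • (fderiv ℝ a (q.1, q.2.1, p.2)).comp projLeft
    + (a (q.1, q.2.1, p.2) * c (q.1, p.1, q.2.2)) • (fderiv ℝ b (q.1, p.2, p.1)).comp projMid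
    + (a (q.1, q.2.1, p.2) * b (q.1, p.2, p.1)) • (fderiv ℝ c (q.1, p.1, q.2.2)).comp projRight

theorem hasFDerivAt_tripleIntegrand (q : ℝ × R3 × R3) (p : R3 × R3) :
    HasFDerivAt (tripleIntegrand a b c · p) (tripleIntegrandDeriv a b c q p) q := by
  have ha := (a.hasFDerivAt _).comp q (hasFDerivAt_leftPoint q p.2)
  have hb := (b.hasFDerivAt _).comp q (hasFDerivAt_midPoint q p.2 p.1)
  have hc := (c.hasFDerivAt _).comp q (hasFDerivAt_rightPoint q p.1)
  refine ((ha.mul hb).mul hc).congr_fderiv ?_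
  refine ContinuousLinearMap.ext fun v => ?_
  simp only [Pi.mul_apply, Function.comp_apply, smul_add, add_apply, smul_apply,
    ContinuousLinearMap.comp_apply, smul_eq_mul, tripleIntegrandDeriv]
  ring

theorem continuous_tripleIntegrandDeriv (q : ℝ × R3 × R3) :
    Continuous (tripleIntegrandDeriv a b c q) := by
  have hd : ∀ f : 𝓚, Continuous (fderiv ℝ f) := fun f =>
    (f.smooth 1).continuous_fderiv one_ne_zero
  unfold tripleIntegrandDeriv
  fun_prop

theorem exists_norm_tripleIntegrandDeriv_le :
    ∃ M, ∀ q p, ‖tripleIntegrandDeriv a b c q p‖ ≤ M * (decayWeight p.1 * decayWeight p.2) := by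
  obtain ⟨M₁, h₁⟩ := exists_tripleProduct_norm_le (SchwartzMap.fderivCLM ℝ _ ℂ a) b c
  obtain ⟨M₂, h₂⟩ := exists_tripleProduct_norm_le a (SchwartzMap.fderivCLM ℝ _ ℂ b) c
  obtain ⟨M₃, h₃⟩ := exists_tripleProduct_norm_le a b (SchwartzMap.fderivCLM ℝ _ ℂ c)
  refine ⟨‖projLeft‖ * M₁ + ‖projMid‖ * M₂ + ‖projRight‖ * M₃, fun q p => ?_⟩
  specialize h₁ q.1 q.2.1 q.2.2 p
  specialize h₂ q.1 q.2.1 q.2.2 p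
  specialize h₃ q.1 q.2.1 q.2.2 p
  simp only [SchwartzMap.fderivCLM_apply] at h₁ h₂ h₃
  calc ‖tripleIntegrandDeriv a b c q p‖
      ≤ ‖projLeft‖ * (‖b (q.1, p.2, p.1) * c (q.1, p.1, q.2.2)‖
            * ‖fderiv ℝ a (q.1, q.2.1, p.2)‖)
        + ‖projMid‖ * (‖a (q.1, q.2.1, p.2) * c (q.1, p.1, q.2.2)‖
            * ‖fderiv ℝ b (q.1, p.2, p.1)‖)
        + ‖projRight‖ * (‖a (q.1, q.2.1, p.2) * b (q.1, p.2, p.1)‖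
            * ‖fderiv ℝ c (q.1, p.1, q.2.2)‖) :=
        (norm_add₃_le ..).trans (add_le_add_three (norm_smul_comp_le ..) (norm_smul_comp_le ..)
          (norm_smul_comp_le ..))
    _ ≤ ‖projLeft‖ * (M₁ * (decayWeight p.1 * decayWeight p.2))
        + ‖projMid‖ * (M₂ * (decayWeight p.1 * decayWeight p.2))
        + ‖projRight‖ * (M₃ * (decayWeight p.1 * decayWeight p.2)) := by
      simp only [norm_mul]
      gcongr ‖projLeft‖ * ?_ + ‖projMid‖ * ?_ + ‖projRight‖ * ?_ <;> linarith
    _ = _ := by ring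

theorem integrable_tripleIntegrandDeriv (q : ℝ × R3 × R3) :
    Integrable (tripleIntegrandDeriv a b c q) := by
  obtain ⟨M, hM⟩ := exists_norm_tripleIntegrandDeriv_le a b c
  exact (integrable_decayWeight_prod.const_mul M).mono'
    (continuous_tripleIntegrandDeriv a b c q).aestronglyMeasurable (.of_forall (hM q))

theorem hasFDerivAt_tripleIntegral (q : ℝ × R3 × R3) :
    HasFDerivAt (tripleIntegral a b c) (∫ p, tripleIntegrandDeriv a b c q p) q := by
  obtain ⟨M, hM⟩ := exists_norm_tripleIntegrandDeriv_le a b c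
  exact hasFDerivAt_integral_of_dominated_of_fderiv_le Filter.univ_mem
    (.of_forall fun q' => (continuous_tripleIntegrand a b c q').aestronglyMeasurable)
    (integrable_tripleIntegrand a b c q)
    (integrable_tripleIntegrandDeriv a b c q).aestronglyMeasurable
    (.of_forall fun p q' _ => hM q' p) (integrable_decayWeight_prod.const_mul M)
    (.of_forall fun p q' _ => hasFDerivAt_tripleIntegrand a b c q' p)

theorem differentiable_tripleIntegral : Differentiable ℝ (tripleIntegral a b c) :=
  fun q => (hasFDerivAt_tripleIntegral a b c q).differentiableAt

theorem fderiv_tripleIntegral_apply (q v : ℝ × R3 × R3) :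
    fderiv ℝ (tripleIntegral a b c) q v
      = tripleIntegral (∂_{projLeft v} a) b c q + tripleIntegral a (∂_{projMid v} b) c q
        + tripleIntegral a b (∂_{projRight v} c) q := by
  have hpt : ∀ p, tripleIntegrandDeriv a b c q p v
      = tripleIntegrand (∂_{projLeft v} a) b c q p + tripleIntegrand a (∂_{projMid v} b) c q p
        + tripleIntegrand a b (∂_{projRight v} c) q p := fun p => by
    simp only [tripleIntegrandDeriv, tripleIntegrand, SchwartzMap.lineDerivOp_apply_eq_fderiv,
      add_apply, smul_apply, ContinuousLinearMap.comp_apply, smul_eq_mul]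
    ring
  rw [(hasFDerivAt_tripleIntegral a b c q).fderiv,
    ContinuousLinearMap.integral_apply (integrable_tripleIntegrandDeriv a b c q)]
  simp only [hpt, tripleIntegral]
  rw [integral_add _ (integrable_tripleIntegrand _ _ _ q),
    integral_add (integrable_tripleIntegrand _ _ _ q) (integrable_tripleIntegrand _ _ _ q)]
  exact (integrable_tripleIntegrand _ _ _ q).add (integrable_tripleIntegrand _ _ _ q)

theorem fderiv_tripleIntegral_eT (q : ℝ × R3 × R3) :
    fderiv ℝ (tripleIntegral a b c) q eT
      = tripleIntegral (∂_{eT} a) b c q + tripleIntegral a (∂_{eT} b) c q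
        + tripleIntegral a b (∂_{eT} c) q :=
  fderiv_tripleIntegral_apply a b c q eT

theorem fderiv_tripleIntegral_eX (q : ℝ × R3 × R3) (i : Fin 3) :
    fderiv ℝ (tripleIntegral a b c) q (eX i) = tripleIntegral (∂_{eX i} a) b c q := by
  have hLeft : projLeft (eX i) = eX i := rfl
  have hMid : projMid (eX i) = 0 := rfl
  have hRight : projRight (eX i) = 0 := rfl
  rw [fderiv_tripleIntegral_apply, hLeft, hMid, hRight, LineDeriv.lineDerivOp_left_zero,
    LineDeriv.lineDerivOp_left_zero, ← tripleIntegralMid_apply a 0 c q,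
    ← tripleIntegralRight_apply a b 0 q, map_zero, map_zero, add_zero, add_zero]

theorem fderiv_tripleIntegral_eY (q : ℝ × R3 × R3) (i : Fin 3) :
    fderiv ℝ (tripleIntegral a b c) q (eY i) = tripleIntegral a b (∂_{eY i} c) q := by
  have hLeft : projLeft (eY i) = 0 := rfl
  have hMid : projMid (eY i) = 0 := rfl
  have hRight : projRight (eY i) = eY i := rfl
  rw [fderiv_tripleIntegral_apply, hLeft, hMid, hRight, LineDeriv.lineDerivOp_left_zero,
    LineDeriv.lineDerivOp_left_zero, ← tripleIntegralLeft_apply 0 b c q,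
    ← tripleIntegralMid_apply a 0 c q, map_zero, map_zero, zero_add, zero_add]

theorem Sop_tripleIntegral (t : ℝ) (x y : R3) :
    Sop (fun s u v => tripleIntegral a b c (s, u, v)) t x y
      = tripleIntegral (schrodinger Complex.I a) b c (t, x, y)
        - tripleIntegral a (schrodinger (-Complex.I) b) c (t, x, y)
        + tripleIntegral a b (schrodinger Complex.I c) (t, x, y) := by
  have hderiv : ∀ v, Differentiable ℝ fun q => fderiv ℝ (tripleIntegral a b c) q v := fun v => by
    simp only [fderiv_tripleIntegral_apply]
    exact ((differentiable_tripleIntegral _ _ _).add (differentiable_tripleIntegral _ _ _)).add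
      (differentiable_tripleIntegral _ _ _)
  rw [Sop_eq_fderiv (differentiable_tripleIntegral a b c) hderiv]
  simp only [fderiv_tripleIntegral_eT, fderiv_tripleIntegral_eX, fderiv_tripleIntegral_eY,
    tripleIntegral_schrodinger_left, tripleIntegral_schrodinger_mid,
    tripleIntegral_schrodinger_right, tripleIntegral_lineDerivOp_eY_eY_left,
    tripleIntegral_lineDerivOp_eY_eY_mid]
  ring

end TripleIntegralDeriv

/-- Leibniz-type identity for `S = i∂_t − Δ_x − Δ_y` on a triple composition
`k₁ ∘ conj(k₂) ∘ k₃` of Schwartz kernels: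
`S(k₁ ∘ conj(k₂) ∘ k₃) = (S k₁) ∘ conj(k₂) ∘ k₃ − k₁ ∘ conj(S k₂) ∘ k₃ + k₁ ∘ conj(k₂) ∘ (S k₃)`. -/
theorem stmt_17 (k₁ k₂ k₃ : SchwartzMap (ℝ × R3 × R3) ℂ) (t : ℝ) (x y : R3) :
    Sop (tComp (tComp (fun s a b => k₁ (s, a, b)) (tConj fun s a b => k₂ (s, a, b)))
        (fun s a b => k₃ (s, a, b))) t x y
      = tComp (tComp (Sop fun s a b => k₁ (s, a, b)) (tConj fun s a b => k₂ (s, a, b)))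
          (fun s a b => k₃ (s, a, b)) t x y
        - tComp (tComp (fun s a b => k₁ (s, a, b)) (tConj (Sop fun s a b => k₂ (s, a, b))))
            (fun s a b => k₃ (s, a, b)) t x y
        + tComp (tComp (fun s a b => k₁ (s, a, b)) (tConj fun s a b => k₂ (s, a, b)))
            (Sop fun s a b => k₃ (s, a, b)) t x y := by
  have hSop : ∀ k : 𝓚,
      (Sop fun s a b => k (s, a, b)) = fun s a b => schrodinger Complex.I k (s, a, b) :=
    fun k => funext fun s => funext fun a => funext fun b => Sop_eq_schrodinger k s a b
  have hConj : ∀ k : 𝓚,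
      (tConj fun s a b => k (s, a, b)) = fun s a b => schwartzConj k (s, a, b) :=
    fun k => rfl
  simp only [hSop, hConj, tComp_tComp_eq_tripleIntegral]
  rw [Sop_tripleIntegral, ← Complex.conj_I, ← schwartzConj_schrodinger]

end
end
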